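/- If X is a metric space (or a metacompact Moore space), S ⊆ X, and X^S is the space with topology generated by the open sets of X together with {x} for each x ∈ S, then X^S is monotonically metacompact. -/

import Mathlib

open Set TopologicalSpace

def PointFinite {X : Type*} (C : Set (Set X)) : Prop :=
  ∀ x : X, {U ∈ C | x ∈ U}.Finite

def Refines {X : Type*} (A B : Set (Set X)) : Prop :=
  ∀ U ∈ A, ∃ V ∈ B, U ⊆ V

def IsOpenCover {X : Type*} [TopologicalSpace X] (C : Set (Set X)) : Prop :=
  (∀ U ∈ C, IsOpen U) ∧ ⋃₀ C = Set.univ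

def MonotonicallyMetacompact (X : Type*) [TopologicalSpace X] : Prop :=
  ∃ r : Set (Set X) → Set (Set X),
    (∀ U, _root_.IsOpenCover U →
      _root_.IsOpenCover (r U) ∧ PointFinite (r U) ∧ Refines (r U) U) ∧
    (∀ U V, _root_.IsOpenCover U → _root_.IsOpenCover V → Refines U V → Refines (r U) (r V))

def MonotonicallyCountablyMetacompact (X : Type*) [TopologicalSpace X] : Prop :=
  ∃ r : Set (Set X) → Set (Set X),
    (∀ U, _root_.IsOpenCover U → U.Countable →
      _root_.IsOpenCover (r U) ∧ PointFinite (r U) ∧ Refines (r U) U) ∧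
    (∀ U V, _root_.IsOpenCover U → _root_.IsOpenCover V → U.Countable → V.Countable →
      Refines U V → Refines (r U) (r V))

def IsPerfectSpace (X : Type*) [TopologicalSpace X] : Prop :=
  ∀ C : Set X, IsClosed C → ∃ f : ℕ → Set X, (∀ n, IsOpen (f n)) ∧ C = ⋂ n, f n

def St {X : Type*} (x : X) (C : Set (Set X)) : Set X := ⋃₀ {G ∈ C | x ∈ G}

def IsDevelopment {X : Type*} [TopologicalSpace X] (G : ℕ → Set (Set X)) : Prop :=
  (∀ n, _root_.IsOpenCover (G n)) ∧
  ∀ x : X, ∀ U : Set X, IsOpen U → x ∈ U → ∃ n, St x (G n) ⊆ U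

def IsMooreSpace (X : Type*) [TopologicalSpace X] : Prop :=
  RegularSpace X ∧ T1Space X ∧ ∃ G : ℕ → Set (Set X), IsDevelopment G

def Metacompact (X : Type*) [TopologicalSpace X] : Prop :=
  ∀ U : Set (Set X), _root_.IsOpenCover U →
    ∃ V, _root_.IsOpenCover V ∧ PointFinite V ∧ Refines V U

open Filter Topology
open scoped SetFamily

/-!
A metacompact space with a development has a development `(F n)` by point-finite open covers
with each `F (n + 1)` refining `F n`. For an open cover `U` of `X^S`, call `x` fine for `U` at
level `n` if every member of `F n` containing `x` lies in a member of `U`; every `x ∉ S` is fine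
at some level, since its neighbourhoods in `X^S` and in `X` agree. Let `r U` consist of the
singletons `{x}`, `x ∈ S`, and of those `H ∈ F n` that are fine at level `n` for one of their
points but at no lower level for any of their points. Walking up the chain `F n ≺ F (n - 1) ≺ ⋯`
shows that every member of `F n` fine at level `n` at one of its points lies in a member of `r U`;
since fineness for `U` implies fineness for any `V` refined by `U`, this gives monotonicity. A
point fine at level `N` lies only in members of `r U` of level at most `N`, whence
point-finiteness.
-/

section

variable {X : Type*}

theorem Refines.refl (A : Set (Set X)) : Refines A A :=
  fun U hU => ⟨U, hU, subset_rfl⟩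

theorem Refines.trans {A B C : Set (Set X)} (hAB : Refines A B) (hBC : Refines B C) :
    Refines A C := by
  intro a ha
  obtain ⟨b, hb, hab⟩ := hAB a ha
  obtain ⟨c, hc, hbc⟩ := hBC b hb
  exact ⟨c, hc, hab.trans hbc⟩

theorem refines_infs_left (A B : Set (Set X)) : Refines (A ⊼ B) A := by
  rintro _ ⟨a, ha, b, -, rfl⟩
  exact ⟨a, ha, inter_subset_left⟩

theorem refines_infs_right (A B : Set (Set X)) : Refines (A ⊼ B) B := by
  rintro _ ⟨a, -, b, hb, rfl⟩
  exact ⟨b, hb, inter_subset_right⟩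

theorem refines_of_le {F : ℕ → Set (Set X)} (hF : ∀ n, Refines (F (n + 1)) (F n)) {m n : ℕ}
    (hmn : m ≤ n) : Refines (F n) (F m) := by
  induction n, hmn using Nat.le_induction with
  | base => exact Refines.refl _
  | succ n _ ih => exact (hF n).trans ih

theorem PointFinite.union {A B : Set (Set X)} (hA : PointFinite A) (hB : PointFinite B) :
    PointFinite (A ∪ B) := fun x =>
  ((hA x).union (hB x)).subset fun _ ⟨hU, hx⟩ => hU.imp (⟨·, hx⟩) (⟨·, hx⟩)

theorem pointFinite_image_singleton (S : Set X) : PointFinite ((fun x => ({x} : Set X)) '' S) :=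
  fun x => (finite_singleton {x}).subset <| by
    rintro _ ⟨⟨y, -, rfl⟩, rfl⟩
    rfl

theorem st_subset_iff {x : X} {C : Set (Set X)} {O : Set X} :
    St x C ⊆ O ↔ ∀ H ∈ C, x ∈ H → H ⊆ O := by
  simp only [St, sUnion_subset_iff, mem_ofPred_eq, and_imp]

theorem Refines.st_subset {A B : Set (Set X)} (h : Refines A B) (x : X) : St x A ⊆ St x B := by
  refine st_subset_iff.2 fun H hH hxH => ?_
  obtain ⟨K, hK, hHK⟩ := h H hH
  exact hHK.trans (subset_sUnion_of_mem ⟨hK, hHK hxH⟩)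

section Topology

variable [TopologicalSpace X]

theorem IsOpenCover.infs {A B : Set (Set X)} (hA : IsOpenCover A) (hB : IsOpenCover B) :
    IsOpenCover (A ⊼ B) := by
  refine ⟨?_, sUnion_eq_univ_iff.2 fun x => ?_⟩
  · rintro _ ⟨a, ha, b, hb, rfl⟩
    exact (hA.1 a ha).inter (hB.1 b hb)
  · obtain ⟨a, ha, hxa⟩ := sUnion_eq_univ_iff.1 hA.2 x
    obtain ⟨b, hb, hxb⟩ := sUnion_eq_univ_iff.1 hB.2 x
    exact ⟨a ∩ b, ⟨a, ha, b, hb, rfl⟩, hxa, hxb⟩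

theorem IsDevelopment.of_refines {F G : ℕ → Set (Set X)} (hG : IsDevelopment G)
    (hF : ∀ n, IsOpenCover (F n)) (hFG : ∀ n, Refines (F n) (G n)) : IsDevelopment F := by
  refine ⟨hF, fun x O hO hxO => ?_⟩
  obtain ⟨n, hn⟩ := hG.2 x O hO hxO
  exact ⟨n, ((hFG n).st_subset x).trans hn⟩

theorem Metacompact.exists_nested_development (hX : Metacompact X) {G : ℕ → Set (Set X)}
    (hG : IsDevelopment G) :
    ∃ F : ℕ → Set (Set X), IsDevelopment F ∧ (∀ n, PointFinite (F n)) ∧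
      ∀ n, Refines (F (n + 1)) (F n) := by
  choose! V hVcov hVpf hVref using hX
  let C : ℕ → Set (Set X) := fun n => Nat.rec (G 0) (fun n Cn => V Cn ⊼ G (n + 1)) n
  have hC : ∀ n, IsOpenCover (C n) := by
    intro n
    induction n with
    | zero => exact hG.1 0
    | succ n ih => exact (hVcov _ ih).infs (hG.1 (n + 1))
  have hCG : ∀ n, Refines (C n) (G n) := by
    rintro (_ | n)
    · exact Refines.refl _
    · exact refines_infs_right _ _
  refine ⟨fun n => V (C n), hG.of_refines (fun n => hVcov _ (hC n))
    (fun n => (hVref _ (hC n)).trans (hCG n)), fun n => hVpf _ (hC n), fun n => ?_⟩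
  exact (hVref _ (hC (n + 1))).trans (refines_infs_left _ _)

theorem metacompact_of_paracompactSpace [ParacompactSpace X] : Metacompact X := by
  intro U hU
  obtain ⟨v, hvo, hvU, hvlf, hvsub⟩ := precise_refinement (fun i : U => (i : Set X))
    (fun i => hU.1 i i.2) (by rw [← sUnion_eq_iUnion]; exact hU.2)
  refine ⟨range v, ⟨forall_mem_range.2 hvo, by rwa [sUnion_range]⟩, fun x => ?_,
    forall_mem_range.2 fun i => ⟨i, i.2, hvsub i⟩⟩
  refine ((hvlf.point_finite x).image v).subset ?_
  rintro _ ⟨⟨i, rfl⟩, hx⟩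
  exact ⟨i, hx, rfl⟩

end Topology

theorem exists_isDevelopment_of_pseudoMetricSpace [PseudoMetricSpace X] :
    ∃ G : ℕ → Set (Set X), IsDevelopment G := by
  refine ⟨fun n => range fun c => Metric.ball c ((1 / 2) ^ n), fun n => ⟨?_, ?_⟩, ?_⟩
  · exact forall_mem_range.2 fun c => Metric.isOpen_ball
  · exact sUnion_eq_univ_iff.2 fun x =>
      ⟨_, ⟨x, rfl⟩, Metric.mem_ball_self (by positivity)⟩
  · intro x O hO hxO
    obtain ⟨ε, hε, hball⟩ := Metric.isOpen_iff.1 hO x hxO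
    obtain ⟨n, hn⟩ := exists_pow_lt_of_lt_one (half_pos hε) (by norm_num : (1 / 2 : ℝ) < 1)
    refine ⟨n, st_subset_iff.2 ?_⟩
    rintro _ ⟨c, rfl⟩ hxc y hyc
    apply hball
    calc dist y x ≤ dist y c + dist x c := dist_triangle_right y x c
      _ < (1 / 2) ^ n + (1 / 2) ^ n := add_lt_add hyc hxc
      _ < ε := by linarith

section FirstFine

variable {F : ℕ → Set (Set X)} {U V : Set (Set X)} {m n : ℕ} {x : X}

def FineAt (F : ℕ → Set (Set X)) (U : Set (Set X)) (n : ℕ) (x : X) : Prop :=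
  Refines {H ∈ F n | x ∈ H} U

def firstFine (F : ℕ → Set (Set X)) (U : Set (Set X)) : Set (Set X) :=
  {H | ∃ n, H ∈ F n ∧ (∃ x ∈ H, FineAt F U n x) ∧ ∀ z ∈ H, ∀ k < n, ¬ FineAt F U k z}

theorem FineAt.mono (hx : FineAt F U n x) (hUV : Refines U V) : FineAt F V n x :=
  Refines.trans hx hUV

theorem firstFine_refines : Refines (firstFine F U) U := by
  rintro H ⟨n, hH, ⟨x, hxH, hx⟩, -⟩
  exact hx H ⟨hH, hxH⟩

theorem exists_firstFine_superset (hF : ∀ n, Refines (F (n + 1)) (F n)) {H : Set X}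
    (hH : H ∈ F m) (hxH : x ∈ H) (hx : FineAt F U m x) : ∃ K ∈ firstFine F U, H ⊆ K := by
  induction m using Nat.strong_induction_on generalizing H x with
  | _ m ih =>
    by_cases hfirst : ∀ z ∈ H, ∀ k < m, ¬ FineAt F U k z
    · exact ⟨H, ⟨m, hH, ⟨x, hxH, hx⟩, hfirst⟩, subset_rfl⟩
    push Not at hfirst
    obtain ⟨z, hzH, k, hkm, hz⟩ := hfirst
    obtain ⟨H', hH', hHH'⟩ := refines_of_le hF hkm.le H hH
    obtain ⟨K, hK, hH'K⟩ := ih k hkm hH' (hHH' hzH) hz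
    exact ⟨K, hK, hHH'.trans hH'K⟩

theorem firstFine_mono (hF : ∀ n, Refines (F (n + 1)) (F n)) (hUV : Refines U V) :
    Refines (firstFine F U) (firstFine F V) := by
  rintro H ⟨n, hH, ⟨x, hxH, hx⟩, -⟩
  exact exists_firstFine_superset hF hH hxH (hx.mono hUV)

variable [TopologicalSpace X]

theorem IsDevelopment.exists_fineAt (hF : IsDevelopment F) {O : Set X} (hO : O ∈ U)
    (hx : O ∈ 𝓝 x) : ∃ n, FineAt F U n x := by
  obtain ⟨W, hWO, hW, hxW⟩ := mem_nhds_iff.1 hx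
  obtain ⟨n, hn⟩ := hF.2 x W hW hxW
  exact ⟨n, fun H hH => ⟨O, hO, (st_subset_iff.1 hn H hH.1 hH.2).trans hWO⟩⟩

theorem IsDevelopment.mem_sUnion_firstFine (hF : IsDevelopment F)
    (hnest : ∀ n, Refines (F (n + 1)) (F n)) (hx : FineAt F U n x) :
    x ∈ ⋃₀ firstFine F U := by
  obtain ⟨H, hH, hxH⟩ := sUnion_eq_univ_iff.1 (hF.1 n).2 x
  obtain ⟨K, hK, hHK⟩ := exists_firstFine_superset hnest hH hxH hx
  exact ⟨K, hK, hHK hxH⟩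

theorem IsDevelopment.pointFinite_firstFine (hF : IsDevelopment F)
    (hpf : ∀ n, PointFinite (F n)) : PointFinite (firstFine F U) := by
  intro y
  by_cases hy : ∃ W ∈ firstFine F U, y ∈ W
  swap
  · exact finite_empty.subset fun W hW => hy ⟨W, hW⟩
  obtain ⟨W, hW, hyW⟩ := hy
  obtain ⟨O, hO, hWO⟩ := firstFine_refines W hW
  obtain ⟨n, hWn, -⟩ := hW
  obtain ⟨N, hN⟩ := hF.exists_fineAt hO
    (mem_of_superset (((hF.1 n).1 W hWn).mem_nhds hyW) hWO)
  refine ((finite_Iic N).biUnion fun n _ => hpf n y).subset ?_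
  rintro W' ⟨⟨n', hW'n', -, hfirst⟩, hyW'⟩
  exact mem_biUnion (not_lt.1 fun hlt => hfirst y hyW' N hlt hN) ⟨hW'n', hyW'⟩

end FirstFine

section Isolating

variable [TopologicalSpace X]

def isolatingBase (S : Set X) : Set (Set X) :=
  {U : Set X | IsOpen U} ∪ (fun x => ({x} : Set X)) '' S

theorem isOpen_generateFrom_isolatingBase (S : Set X) {U : Set X} (hU : IsOpen U) :
    IsOpen[generateFrom (isolatingBase S)] U :=
  isOpen_generateFrom_of_mem (Or.inl hU)

theorem isOpen_generateFrom_isolatingBase_singleton {S : Set X} {x : X} (hx : x ∈ S) :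
    IsOpen[generateFrom (isolatingBase S)] {x} :=
  isOpen_generateFrom_of_mem (Or.inr ⟨x, hx, rfl⟩)

theorem nhds_generateFrom_isolatingBase_of_notMem {S : Set X} {x : X} (hx : x ∉ S) :
    @nhds X (generateFrom (isolatingBase S)) x = 𝓝 x := by
  rw [nhds_generateFrom, nhds_def]
  congr! 3 with s
  refine and_congr_right fun hxs => or_iff_left ?_
  rintro ⟨y, hy, rfl⟩
  exact hx (mem_singleton_iff.1 hxs ▸ hy)

theorem IsDevelopment.monotonicallyMetacompact_generateFrom_isolatingBase {F : ℕ → Set (Set X)}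
    (hF : IsDevelopment F) (hpf : ∀ n, PointFinite (F n))
    (hnest : ∀ n, Refines (F (n + 1)) (F n)) (S : Set X) :
    @MonotonicallyMetacompact X (generateFrom (isolatingBase S)) := by
  refine ⟨fun U => firstFine F U ∪ (fun x => {x}) '' S, fun U hU => ⟨⟨?_, ?_⟩, ?_, ?_⟩,
    fun U V _ _ hUV => ?_⟩
  · rintro W (⟨n, hWn, -⟩ | ⟨x, hx, rfl⟩)
    · exact isOpen_generateFrom_isolatingBase S ((hF.1 n).1 W hWn)
    · exact isOpen_generateFrom_isolatingBase_singleton hx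
  · refine sUnion_eq_univ_iff.2 fun x => ?_
    by_cases hxS : x ∈ S
    · exact ⟨{x}, Or.inr ⟨x, hxS, rfl⟩, rfl⟩
    obtain ⟨O, hO, hxO⟩ := sUnion_eq_univ_iff.1 hU.2 x
    have hOx : O ∈ 𝓝 x :=
      nhds_generateFrom_isolatingBase_of_notMem hxS ▸ @IsOpen.mem_nhds X (_) _ _ (hU.1 O hO) hxO
    obtain ⟨n, hn⟩ := hF.exists_fineAt hO hOx
    obtain ⟨K, hK, hxK⟩ := hF.mem_sUnion_firstFine hnest hn
    exact ⟨K, Or.inl hK, hxK⟩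
  · exact hF.pointFinite_firstFine hpf |>.union (pointFinite_image_singleton S)
  · rintro W (hW | ⟨x, -, rfl⟩)
    · exact firstFine_refines W hW
    · obtain ⟨O, hO, hxO⟩ := sUnion_eq_univ_iff.1 hU.2 x
      exact ⟨O, hO, singleton_subset_iff.2 hxO⟩
  · rintro W (hW | hW)
    · obtain ⟨K, hK, hWK⟩ := firstFine_mono hnest hUV W hW
      exact ⟨K, Or.inl hK, hWK⟩
    · exact ⟨W, Or.inr hW, subset_rfl⟩

end Isolating

end

theorem stmt7 {X : Type*} [TopologicalSpace X]
    (h : MetrizableSpace X ∨ (IsMooreSpace X ∧ Metacompact X)) (S : Set X) :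
    @MonotonicallyMetacompact X
      (generateFrom ({U : Set X | IsOpen U} ∪ (fun x => ({x} : Set X)) '' S)) := by
  obtain ⟨G, hG, hX⟩ : ∃ G : ℕ → Set (Set X), IsDevelopment G ∧ Metacompact X := by
    rcases h with hmet | ⟨⟨-, -, G, hG⟩, hX⟩
    · let := metrizableSpaceMetric X
      obtain ⟨G, hG⟩ := exists_isDevelopment_of_pseudoMetricSpace (X := X)
      exact ⟨G, hG, metacompact_of_paracompactSpace⟩
    · exact ⟨G, hG, hX⟩
  obtain ⟨F, hF, hpf, hnest⟩ := hX.exists_nested_development hG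
  exact hF.monotonicallyMetacompact_generateFrom_isolatingBase hpf hnest S
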